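/- arXiv:2011.15010 — 2 statements merged into one kernel-verified Lean document; each statement's English description precedes it below -/
import Mathlib

section
/- Let k ≥ 2 and n = 2k. There exists an n×n {0,1}-matrix with exactly 3k+1 ones such that every k×k minor contains at least one 1. It can be taken as the block-diagonal matrix with the (k-1)×(k-1) identity in the top-left and the (k+1)×(k+1) matrix B in the bottom-right, where B has 1's exactly at positions (1,1),(1,2),(k+1,k),(k+1,k+1), and (j,j-1),(j,j+1) for 2 ≤ j ≤ k. -/
/-- Every k×k minor (choice of k rows and k columns) of `A` contains a 1. -/
def MinorHit (n k : ℕ) (A : Fin n → Fin n → Bool) : Prop :=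
  ∀ S T : Finset (Fin n), S.card = k → T.card = k → ∃ i ∈ S, ∃ j ∈ T, A i j = true

/-- The number of entries of `A` equal to 1. -/
def onesCount {n : ℕ} (A : Fin n → Fin n → Bool) : ℕ :=
  (Finset.univ.filter fun p : Fin n × Fin n => A p.1 p.2 = true).card

/-- Block-diagonal matrix: identity `I_{k-1}` in the top-left, and in the bottom-right
the `(k+1)×(k+1)` block `B` with 1's exactly at (0-indexed) positions
`(0,0),(0,1),(k,k-1),(k,k)` and `(r,r-1),(r,r+1)` for `1 ≤ r ≤ k-1`. -/
def blockMatrix (k : ℕ) : Fin (2 * k) → Fin (2 * k) → Bool :=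
  fun i j =>
    decide ((i.val < k - 1 ∧ i = j) ∨
      (k - 1 ≤ i.val ∧ k - 1 ≤ j.val ∧
        ((i.val - (k - 1)) + 1 = j.val - (k - 1) ∨
         (j.val - (k - 1)) + 1 = i.val - (k - 1) ∨
         (i.val = k - 1 ∧ j.val = k - 1) ∨
         (i.val = 2 * k - 1 ∧ j.val = 2 * k - 1))))

/-!
Each of the `k - 1` top rows has its single 1 in its own column, and the block `B` has two 1's
per row, whence `3k + 1` ones. For a set `S` of `k` rows, let `s` be the first row of `B` not in
`S` (`B` has `k + 1` rows) and `M` the last row of `S` (a row of `B`, as there are only `k - 1`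
top rows). Sending row `i` to column `i` for `i < s` and to column `i - 1` for `i > s` injects
`S` into the columns that `S` hits, and misses column `min (M + 1) (2k - 1)`, which row `M` hits.
So `S` hits at least `k + 1` of the `2k` columns, and no `k` columns avoid all of them.
-/

open Finset

def rowSupport {n : ℕ} (A : Fin n → Fin n → Bool) (S : Finset (Fin n)) : Finset (Fin n) :=
  univ.filter fun j => ∃ i ∈ S, A i j = true

theorem minorHit_of_lt_card_rowSupport {n k : ℕ} {A : Fin n → Fin n → Bool}
    (h : ∀ S : Finset (Fin n), #S = k → n < k + #(rowSupport A S)) : MinorHit n k A := by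
  intro S T hS hT
  by_contra! hmiss
  have hdisj : Disjoint (rowSupport A S) T := by
    rw [disjoint_left]
    intro j hj hjT
    obtain ⟨i, hi, hij⟩ := (mem_filter.mp hj).2
    exact hmiss i hi j hjT hij
  have hunion := card_le_univ (rowSupport A S ∪ T)
  rw [card_union_of_disjoint hdisj, Fintype.card_fin] at hunion
  have := h S hS
  omega

theorem onesCount_eq_sum_card_rowSupport {n : ℕ} (A : Fin n → Fin n → Bool) :
    onesCount A = ∑ i, #(rowSupport A {i}) := by
  simp only [onesCount, rowSupport, card_filter, ← univ_product_univ, sum_product,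
    mem_singleton, exists_eq_left]

-- `blockMatrix k` in absolute coordinates: `B` occupies the indices `k - 1, …, 2k - 1`.
def IsBlockOne (k i j : ℕ) : Prop :=
  (i < k - 1 ∧ j = i) ∨
    (k - 1 ≤ i ∧ k - 1 ≤ j ∧
      (j = i + 1 ∨ i = j + 1 ∨ (j = i ∧ (i = k - 1 ∨ i = 2 * k - 1))))

instance (k i j : ℕ) : Decidable (IsBlockOne k i j) := by
  unfold IsBlockOne; infer_instance

theorem blockMatrix_eq_true_iff {k : ℕ} {i j : Fin (2 * k)} :
    blockMatrix k i j = true ↔ IsBlockOne k i j := by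
  simp only [blockMatrix, IsBlockOne, decide_eq_true_eq, Fin.ext_iff]
  omega

def blockNbhd (k : ℕ) (R : Finset ℕ) : Finset ℕ :=
  (range (2 * k)).filter fun j => ∃ i ∈ R, IsBlockOne k i j

theorem mem_blockNbhd {k j : ℕ} {R : Finset ℕ} :
    j ∈ blockNbhd k R ↔ j < 2 * k ∧ ∃ i ∈ R, IsBlockOne k i j := by
  rw [blockNbhd, mem_filter, mem_range]

theorem map_rowSupport_blockMatrix (k : ℕ) (S : Finset (Fin (2 * k))) :
    (rowSupport (blockMatrix k) S).map Fin.valEmbedding = blockNbhd k (S.map Fin.valEmbedding) := by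
  ext j
  simp only [rowSupport, blockNbhd, mem_map, mem_filter, mem_univ, true_and, mem_range,
    Fin.valEmbedding_apply, blockMatrix_eq_true_iff]
  constructor
  · rintro ⟨j, ⟨i, hi, hij⟩, rfl⟩
    exact ⟨j.isLt, i, ⟨i, hi, rfl⟩, hij⟩
  · rintro ⟨hj, _, ⟨i, hi, rfl⟩, hij⟩
    exact ⟨⟨j, hj⟩, ⟨i, hi, hij⟩, rfl⟩

theorem card_blockNbhd_singleton {k i : ℕ} (hi : i < 2 * k) :
    #(blockNbhd k {i}) = if i < k - 1 then 1 else 2 := by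
  split_ifs with htop
  · rw [card_eq_one]
    refine ⟨i, ?_⟩
    ext j
    simp only [mem_blockNbhd, IsBlockOne, mem_singleton, exists_eq_left]
    omega
  · rw [card_eq_two]
    refine ⟨max (i - 1) (k - 1), min (i + 1) (2 * k - 1), by omega, ?_⟩
    ext j
    simp only [mem_blockNbhd, IsBlockOne, mem_singleton, exists_eq_left, mem_insert]
    omega

theorem onesCount_blockMatrix {k : ℕ} (hk : 1 ≤ k) : onesCount (blockMatrix k) = 3 * k + 1 := by
  have hrow (i : Fin (2 * k)) : #(rowSupport (blockMatrix k) {i}) = if i < k - 1 then 1 else 2 := by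
    rw [← card_map Fin.valEmbedding, map_rowSupport_blockMatrix, map_singleton,
      Fin.valEmbedding_apply, card_blockNbhd_singleton i.isLt]
  rw [onesCount_eq_sum_card_rowSupport, Fintype.sum_congr _ _ hrow,
    Fin.sum_univ_eq_sum_range (fun i => if i < k - 1 then 1 else 2),
    show 2 * k = (k - 1) + (k + 1) by omega, sum_range_add,
    sum_congr rfl fun i hi => if_pos (mem_range.mp hi)]
  simp only [sum_const, card_range, smul_eq_mul, mul_one, add_lt_iff_neg_left, not_lt_zero,
    if_false]
  omega

theorem mem_blockNbhd_of_shift {k s : ℕ} {R : Finset ℕ} (hR : R ⊆ range (2 * k))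
    (hs : k - 1 ≤ s) (hsR : s ∉ R) (hbelow : ∀ i, k - 1 ≤ i → i < s → i ∈ R)
    {i : ℕ} (hi : i ∈ R) :
    (if i < s then i else i - 1) ∈ blockNbhd k R := by
  have his := ne_of_mem_of_not_mem hi hsR
  have hi2k := mem_range.mp (hR hi)
  rw [mem_blockNbhd]
  split_ifs with hlt
  · rcases le_or_gt i (k - 1) with htop | hbot
    · exact ⟨by omega, i, hi, by unfold IsBlockOne; omega⟩
    · exact ⟨by omega, i - 1, hbelow _ (by omega) (by omega), by unfold IsBlockOne; omega⟩
  · exact ⟨by omega, i, hi, by unfold IsBlockOne; omega⟩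

theorem exists_first_notMem_Ico {R : Finset ℕ} {a b : ℕ} (h : #R < b - a) :
    ∃ s, a ≤ s ∧ s < b ∧ s ∉ R ∧ ∀ i, a ≤ i → i < s → i ∈ R := by
  have hgap : ∃ s, a ≤ s ∧ s < b ∧ s ∉ R := by
    by_contra! hall
    have := card_le_card fun i (hi : i ∈ Ico a b) => hall i (mem_Ico.mp hi).1 (mem_Ico.mp hi).2
    rw [Nat.card_Ico] at this
    omega
  obtain ⟨ha, hb, hR⟩ := Nat.find_spec hgap
  refine ⟨Nat.find hgap, ha, hb, hR, fun i hai his => ?_⟩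
  by_contra hiR
  exact Nat.find_min hgap his ⟨hai, his.trans hb, hiR⟩

theorem card_lt_card_blockNbhd {k : ℕ} {R : Finset ℕ} (hR : R ⊆ range (2 * k))
    (htop : k - 1 < #R) (hbot : #R ≤ k) : #R < #(blockNbhd k R) := by
  obtain ⟨s, hs, hs2k, hsR, hbelow⟩ := exists_first_notMem_Ico (a := k - 1) (b := 2 * k)
    (by omega : #R < 2 * k - (k - 1))
  have hne : R.Nonempty := card_pos.mp (by omega)
  set M := R.max' hne
  have hMR : M ∈ R := R.max'_mem hne
  have hM2k : M < 2 * k := mem_range.mp (hR hMR)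
  have hM : k - 1 ≤ M := by
    by_contra! h
    have := card_le_card fun i hi => mem_range.mpr ((R.le_max' i hi).trans_lt h)
    simp only [card_range] at this
    omega
  let φ : ℕ → ℕ := fun i => if i < s then i else i - 1
  have hinj : Set.InjOn φ R := by
    intro i hi j hj hij
    have := ne_of_mem_of_not_mem hi hsR
    have := ne_of_mem_of_not_mem hj hsR
    simp only [φ] at hij
    split_ifs at hij <;> omega
  have hmaps : R.image φ ⊆ blockNbhd k R := by
    intro j hj
    obtain ⟨i, hi, rfl⟩ := mem_image.mp hj
    exact mem_blockNbhd_of_shift hR hs hsR hbelow hi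
  have he : min (M + 1) (2 * k - 1) ∈ blockNbhd k R :=
    mem_blockNbhd.mpr ⟨by omega, M, hMR, by unfold IsBlockOne; omega⟩
  have hnot : min (M + 1) (2 * k - 1) ∉ R.image φ := by
    intro h
    obtain ⟨i, hi, hie⟩ := mem_image.mp h
    have := R.le_max' i hi
    have := ne_of_mem_of_not_mem hi hsR
    have := ne_of_mem_of_not_mem hMR hsR
    simp only [φ] at hie
    split_ifs at hie <;> omega
  calc #R = #(R.image φ) := (card_image_of_injOn hinj).symm
    _ < #(insert _ (R.image φ)) := by rw [card_insert_of_notMem hnot]; omega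
    _ ≤ #(blockNbhd k R) := card_le_card (insert_subset he hmaps)

theorem minorHit_blockMatrix {k : ℕ} (hk : 1 ≤ k) : MinorHit (2 * k) k (blockMatrix k) := by
  refine minorHit_of_lt_card_rowSupport fun S hS => ?_
  have hR : S.map Fin.valEmbedding ⊆ range (2 * k) := by
    intro i hi
    obtain ⟨i, -, rfl⟩ := mem_map.mp hi
    exact mem_range.mpr i.isLt
  have := card_lt_card_blockNbhd hR (by rw [card_map]; omega) (by rw [card_map]; omega)
  rw [← map_rowSupport_blockMatrix, card_map, card_map] at this
  omega

theorem block_matrix_realizes_minimum (k : ℕ) (hk : 2 ≤ k) :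
    onesCount (blockMatrix k) = 3 * k + 1 ∧ MinorHit (2 * k) k (blockMatrix k) :=
  ⟨onesCount_blockMatrix (by omega), minorHit_blockMatrix (by omega)⟩
end

section
/- Let k be a sufficiently large positive integer and n = 2k+1, and let α(k,n) be the minimum number of 1-entries in an n×n {0,1}-matrix in which every k×k minor contains a 1. Then α(k, 2k+1) ≤ ⌈(10k+25)/3⌉; more precisely α(k,2k+1) is at most (10k+24)/3, (10k+23)/3, or (10k+25)/3 according as k ≡ 0, 1, 2 (mod 3). -/
/-- `alpha k n` is the minimum number of 1-entries in an `n × n` {0,1}-matrix in which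
every `k × k` minor contains at least one 1. -/
noncomputable def alpha (k n : ℕ) : ℕ :=
  sInf {m : ℕ | ∃ A : Fin n → Fin n → Bool, MinorHit n k A ∧ onesCount A = m}

open Finset

section RowMatrix

variable {ι : Type*} [Fintype ι] [DecidableEq ι] {n : ℕ}

def ofRows (e : Fin n ≃ ι) (row : ι → Finset ι) : Fin n → Fin n → Bool :=
  fun i j => decide (e j ∈ row (e i))

lemma minorHit_ofRows {k : ℕ} (e : Fin n ≃ ι) (row : ι → Finset ι)
    (h : ∀ S : Finset ι, #S = k → n < k + #(S.biUnion row)) :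
    MinorHit n k (ofRows e row) := by
  intro S T hS hT
  by_contra! hST
  have hdisj : Disjoint (T.map e.toEmbedding) ((S.map e.toEmbedding).biUnion row) := by
    simp only [disjoint_left, mem_map_equiv, mem_biUnion]
    rintro _ hj ⟨_, hi, hji⟩
    simpa [ofRows, hji] using hST _ hi _ hj
  have hcard := card_le_univ (T.map e.toEmbedding ∪ (S.map e.toEmbedding).biUnion row)
  rw [card_union_of_disjoint hdisj, card_map, ← Fintype.card_congr e, Fintype.card_fin] at hcard
  have := h (S.map e.toEmbedding) (by rw [card_map, hS])
  omega

lemma onesCount_ofRows (e : Fin n ≃ ι) (row : ι → Finset ι) :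
    onesCount (ofRows e row) = ∑ x, #(row x) := by
  have : onesCount (ofRows e row) = #{p : ι × ι | p.2 ∈ row p.1} :=
    card_equiv (e.prodCongr e) (by simp [ofRows])
  rw [this, card_filter, Fintype.sum_prod_type]
  simp

end RowMatrix

section Cycle

lemma ZMod.natCast_injOn_range (m : ℕ) : Set.InjOn (fun j : ℕ => (j : ZMod m)) (range m) := by
  intro i hi j hj hij
  simp only [coe_range, Set.mem_Iio] at hi hj
  rw [← ZMod.val_cast_of_lt hi, ← ZMod.val_cast_of_lt hj]
  exact congrArg ZMod.val hij

variable {m : ℕ} [NeZero m]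

def cycleRow (m d : ℕ) (a : ZMod m) : Finset (ZMod m) :=
  if d ∣ a.val then {a, a + 1, a - d} else {a, a + 1}

lemma exists_lt_dvd_val_add {d : ℕ} (hd : 0 < d) (c : ZMod m) :
    ∃ i < d, d ∣ (c + i).val := by
  by_cases hwrap : m < c.val + d
  · refine ⟨m - c.val, by omega, ?_⟩
    rw [Nat.cast_sub (ZMod.val_lt c).le, ZMod.natCast_self, ZMod.natCast_zmod_val]
    simp
  · have hr : (c.val + d - 1) % d < d := Nat.mod_lt _ hd
    refine ⟨d - 1 - (c.val + d - 1) % d, by omega, ?_⟩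
    rw [ZMod.val_add_of_lt, ZMod.val_cast_of_lt (by omega)]
    · convert Nat.dvd_sub_mod (n := d) (c.val + d - 1) using 1
      omega
    · rw [ZMod.val_cast_of_lt (by omega)]
      omega

lemma eq_univ_of_add_one_mem {B : Finset (ZMod m)} (hB : B.Nonempty)
    (hstep : ∀ c ∈ B, c + 1 ∈ B) : B = univ := by
  obtain ⟨c, hc⟩ := hB
  have hiter : ∀ j : ℕ, c + j ∈ B := by
    intro j
    induction j with
    | zero => simpa using hc
    | succ j ih => simpa [add_assoc] using hstep _ ih
  refine eq_univ_of_forall fun x => ?_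
  simpa using hiter (x - c).val

lemma eq_image_Icc_of_add_one_mem {B : Finset (ZMod m)} {b : ZMod m} (hb : b ∉ B)
    (hstep : ∀ c ∈ B, c + 1 ∈ B ∨ c + 1 = b) :
    B = (Icc 1 #B).image fun j : ℕ => b - j := by
  have hcard : #((Icc 1 #B).image fun j : ℕ => b - j) ≤ #B :=
    card_image_le.trans (by rw [Nat.card_Icc]; omega)
  refine eq_of_subset_of_card_le ?_ hcard
  intro c hc
  set t := (b - c).val with ht
  have hbc : b = c + t := by rw [ht, ZMod.natCast_zmod_val]; ring
  have hrun : ∀ i < t, c + i ∈ B := by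
    intro i
    induction i with
    | zero => exact fun _ => by simpa using hc
    | succ i ih =>
      intro hi
      rcases hstep _ (ih (by omega)) with h | h
      · simpa [add_assoc] using h
      · have : t = i + 1 := by
          rw [ht, ← h, show c + i + 1 - c = ((i + 1 : ℕ) : ZMod m) by push_cast; ring,
            ZMod.val_cast_of_lt]
          exact hi.trans (ZMod.val_lt _)
        omega
  have htB : t ≤ #B := by
    simpa using card_le_card_of_injOn _ (fun i hi => hrun i (by simpa using hi))
      ((add_right_injective c).comp_injOn <|
        (ZMod.natCast_injOn_range m).mono (range_subset_range.mpr (ZMod.val_lt _).le))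
  have ht0 : t ≠ 0 := fun h0 => hb (by simpa [hbc, h0] using hc)
  exact mem_image.mpr ⟨t, mem_Icc.mpr ⟨by omega, htB⟩, by rw [hbc]; ring⟩

lemma exists_mem_dvd_val_sub_notMem_insert {d : ℕ} (hd : 0 < d) {B : Finset (ZMod m)}
    {b : ZMod m} (hb : b ∉ B) (hstep : ∀ c ∈ B, c + 1 ∈ B ∨ c + 1 = b)
    (hdB : d ≤ #B) (hBm : #B + d < m) :
    ∃ r ∈ B, d ∣ r.val ∧ r - d ∉ insert b B := by
  -- `B` is the arc `b - s, …, b - 1`; the chord of a multiple of `d` among its first `d`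
  -- vertices ends at most `d` steps before the arc, hence outside `insert b B` as `s + d < m`.
  set s := #B
  have harc : B = (Icc 1 s).image fun j : ℕ => b - j := eq_image_Icc_of_add_one_mem hb hstep
  obtain ⟨i, hid, hdvd⟩ := exists_lt_dvd_val_add hd (b - (s : ZMod m))
  refine ⟨b - s + i, ?_, hdvd, fun hmem => ?_⟩
  · rw [harc]
    refine mem_image.mpr ⟨s - i, mem_Icc.mpr ⟨by omega, by omega⟩, ?_⟩
    push_cast [Nat.cast_sub (show i ≤ s by omega)]
    ring
  obtain ⟨j, hjs, hj⟩ : ∃ j ≤ s, b - s + i - d = b - j := by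
    rcases mem_insert.mp hmem with h | h
    · exact ⟨0, by omega, by simp [h]⟩
    · rw [harc] at h
      obtain ⟨j, hj, h⟩ := mem_image.mp h
      exact ⟨j, (mem_Icc.mp hj).2, h.symm⟩
  have hcast : ((s + d - i : ℕ) : ZMod m) = (j : ZMod m) := by
    push_cast [Nat.cast_sub (show i ≤ s + d by omega)]
    linear_combination -hj
  have := ZMod.natCast_injOn_range m (by simp; omega) (by simp; omega) hcast
  omega

lemma card_add_two_le_card_biUnion_cycleRow {d : ℕ} (hd : 0 < d) {B : Finset (ZMod m)}
    (hdB : d ≤ #B) (hBm : #B + d < m) :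
    #B + 2 ≤ #(B.biUnion (cycleRow m d)) := by
  set N := B.biUnion (cycleRow m d)
  have hself : B ⊆ N := fun c hc =>
    mem_biUnion.mpr ⟨c, hc, by unfold cycleRow; split_ifs <;> simp⟩
  have hsucc : ∀ c ∈ B, c + 1 ∈ N := fun c hc =>
    mem_biUnion.mpr ⟨c, hc, by unfold cycleRow; split_ifs <;> simp⟩
  obtain ⟨c₀, hc₀, hb⟩ : ∃ c ∈ B, c + 1 ∉ B := by
    by_contra! hclosed
    have := eq_univ_of_add_one_mem (card_pos.mp (by omega)) hclosed
    rw [this, card_univ, ZMod.card] at hBm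
    omega
  set b := c₀ + 1
  have htwo : ∀ x ∈ N, x ∉ insert b B → #B + 2 ≤ #N := by
    intro x hx hxb
    calc #B + 2 = #(insert x (insert b B)) := by
          rw [card_insert_of_notMem hxb, card_insert_of_notMem hb]
      _ ≤ #N := card_le_card (insert_subset hx (insert_subset (hsucc _ hc₀) hself))
  by_cases hstep : ∀ c ∈ B, c + 1 ∈ B ∨ c + 1 = b
  · obtain ⟨r, hr, hdvd, hchord⟩ :=
      exists_mem_dvd_val_sub_notMem_insert hd hb hstep hdB hBm
    exact htwo _ (mem_biUnion.mpr ⟨r, hr, by simp [cycleRow, hdvd]⟩) hchord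
  · push Not at hstep
    obtain ⟨c, hc, hcB, hcb⟩ := hstep
    exact htwo _ (hsucc c hc) (by simp [hcB, hcb])

lemma card_filter_dvd_val_le (d : ℕ) : #({a | d ∣ a.val} : Finset (ZMod m)) ≤ m / d + 1 := by
  have hsub : ({a | d ∣ a.val} : Finset (ZMod m)) ⊆
      (range (m / d + 1)).image fun j : ℕ => ((d * j : ℕ) : ZMod m) := by
    intro a ha
    refine mem_image.mpr ⟨a.val / d, ?_, ?_⟩
    · exact mem_range.mpr (Nat.lt_succ_of_le (Nat.div_le_div_right (ZMod.val_lt a).le))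
    · rw [Nat.mul_div_cancel' (mem_filter.mp ha).2, ZMod.natCast_zmod_val]
  exact (card_le_card hsub).trans (card_image_le.trans (by simp))

lemma sum_card_cycleRow_le (d : ℕ) : ∑ a, #(cycleRow m d a) ≤ 2 * m + (m / d + 1) := by
  have hrow : ∀ a, #(cycleRow m d a) ≤ 2 + if d ∣ a.val then 1 else 0 := by
    intro a
    unfold cycleRow
    split_ifs
    · exact card_le_three
    · exact card_le_two
  calc ∑ a, #(cycleRow m d a) ≤ ∑ a : ZMod m, (2 + if d ∣ a.val then 1 else 0) :=
        sum_le_sum fun a _ => hrow a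
    _ = 2 * m + #({a | d ∣ a.val} : Finset (ZMod m)) := by
        rw [sum_add_distrib, sum_const, card_univ, ZMod.card, smul_eq_mul, card_filter, mul_comm]
    _ ≤ 2 * m + (m / d + 1) := by gcongr; exact card_filter_dvd_val_le d

end Cycle

def blockRow (m d q : ℕ) : ZMod m ⊕ Fin q → Finset (ZMod m ⊕ Fin q)
  | .inl a => (cycleRow m d a).map .inl
  | .inr b => {.inr b}

section Block

variable {m : ℕ} [NeZero m] {d q : ℕ}

lemma card_add_two_le_card_biUnion_blockRow (hd : 0 < d) {S : Finset (ZMod m ⊕ Fin q)}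
    (hqS : q + d ≤ #S) (hSm : #S + d < m) : #S + 2 ≤ #(S.biUnion (blockRow m d q)) := by
  have hsub :
      (S.toLeft.biUnion (cycleRow m d)).disjSum S.toRight ⊆ S.biUnion (blockRow m d q) := by
    rw [disjSum_subset]
    constructor
    · intro a ha
      obtain ⟨c, hc, hac⟩ := mem_biUnion.mp ha
      exact mem_toLeft.mpr
        (mem_biUnion.mpr ⟨_, mem_toLeft.mp hc, by simpa [blockRow] using hac⟩)
    · intro b hb
      exact mem_toRight.mpr (mem_biUnion.mpr ⟨_, mem_toRight.mp hb, by simp [blockRow]⟩)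
  have hright : #S.toRight ≤ q := (card_le_univ _).trans_eq (Fintype.card_fin q)
  have hsplit := card_toLeft_add_card_toRight (u := S)
  have hleft := card_add_two_le_card_biUnion_cycleRow hd (B := S.toLeft) (by omega) (by omega)
  have := card_le_card hsub
  rw [card_disjSum] at this
  omega

lemma sum_card_blockRow_le : ∑ x, #(blockRow m d q x) ≤ 2 * m + (m / d + 1) + q := by
  simpa [Fintype.sum_sum_type, blockRow] using sum_card_cycleRow_le (m := m) d

end Block

lemma alpha_le_onesCount {n k : ℕ} {A : Fin n → Fin n → Bool} (hA : MinorHit n k A) :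
    alpha k n ≤ onesCount A :=
  Nat.sInf_le ⟨A, hA, rfl⟩

theorem alpha_le_ten_thirds :
    ∃ K : ℕ, ∀ k : ℕ, K ≤ k →
      alpha k (2 * k + 1) ≤ (10 * k + 25 + 2) / 3 ∧
      (k % 3 = 0 → alpha k (2 * k + 1) ≤ (10 * k + 24) / 3) ∧
      (k % 3 = 1 → alpha k (2 * k + 1) ≤ (10 * k + 23) / 3) ∧
      (k % 3 = 2 → alpha k (2 * k + 1) ≤ (10 * k + 25) / 3) := by
  refine ⟨12, fun k hk => ?_⟩
  have hcard : Fintype.card (ZMod (k + 6) ⊕ Fin (k - 5)) = 2 * k + 1 := by simp; omega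
  let e := (Fintype.equivFinOfCardEq hcard).symm
  have hhit : MinorHit (2 * k + 1) k (ofRows e (blockRow (k + 6) 5 (k - 5))) :=
    minorHit_ofRows e _ fun S hS => by
      have := card_add_two_le_card_biUnion_blockRow (d := 5) (S := S) (by norm_num)
        (by omega) (by omega)
      omega
  have hbound : alpha k (2 * k + 1) ≤ 2 * (k + 6) + ((k + 6) / 5 + 1) + (k - 5) := by
    calc alpha k (2 * k + 1) ≤ onesCount (ofRows e (blockRow (k + 6) 5 (k - 5))) :=
          alpha_le_onesCount hhit
      _ = ∑ x, #(blockRow (k + 6) 5 (k - 5) x) := onesCount_ofRows e _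
      _ ≤ _ := sum_card_blockRow_le
  refine ⟨by omega, fun _ => by omega, fun _ => by omega, fun _ => by omega⟩
end
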